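/- Let θ, ρ : [t̄, T_F) → ℝ be continuously differentiable functions, c > 0 and γ ≥ 1 constants such that θ'(s) ≥ c·|ρ'(s)|^γ for all s ∈ [t̄, T_F), and suppose ρ(t) → +∞ as t → T_F⁻. Then θ(t) → +∞ as t → T_F⁻. -/

import Mathlib

/-!
Since `|x| ≤ 1 + |x| ^ γ` for `γ ≥ 1`, the hypothesis gives `c ρ' ≤ θ' + c`, so
`θ - c ρ + c t` is nondecreasing on `[t̄, T_F)`. Hence `θ t ≥ c ρ t - C` there, and `θ` blows up
with `ρ`.
-/

open Set Filter

lemma le_one_add_rpow {a γ : ℝ} (ha : 0 ≤ a) (hγ : 1 ≤ γ) : a ≤ 1 + a ^ γ := by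
  rcases le_or_gt a 1 with h1 | h1
  · linarith [Real.rpow_nonneg ha γ]
  · linarith [Real.rpow_one a ▸ Real.rpow_le_rpow_of_exponent_le h1.le hγ]

lemma monotoneOn_of_hasDerivAt_nonneg {D : Set ℝ} (hD : Convex ℝ D) {f f' : ℝ → ℝ}
    (hf : ∀ x ∈ D, HasDerivAt f (f' x) x) (hf' : ∀ x ∈ D, 0 ≤ f' x) : MonotoneOn f D :=
  monotoneOn_of_hasDerivWithinAt_nonneg hD
    (fun x hx => (hf x hx).continuousAt.continuousWithinAt)
    (fun x hx => (hf x (interior_subset hx)).hasDerivWithinAt)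
    (fun x hx => hf' x (interior_subset hx))

theorem stmt_3_general
    (tbar TF : ℝ) (h : tbar < TF)
    (θ θ' ρ ρ' : ℝ → ℝ)
    (hθderiv : ∀ t ∈ Ico tbar TF, HasDerivAt θ (θ' t) t)
    (hρderiv : ∀ t ∈ Ico tbar TF, HasDerivAt ρ (ρ' t) t)
    (c γ : ℝ) (hc : 0 < c) (hγ : 1 ≤ γ)
    (hineq : ∀ s ∈ Ico tbar TF, c * |ρ' s| ^ γ ≤ θ' s)
    (hblow : Tendsto ρ (nhdsWithin TF (Iio TF)) atTop) :
    Tendsto θ (nhdsWithin TF (Iio TF)) atTop := by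
  have hmono : MonotoneOn (fun s => θ s - c * ρ s + c * s) (Ico tbar TF) := by
    refine monotoneOn_of_hasDerivAt_nonneg (convex_Ico tbar TF) (fun s hs =>
      ((hθderiv s hs).sub ((hρderiv s hs).const_mul c)).add ((hasDerivAt_id s).const_mul c))
      fun s hs => ?_
    have hρ' : ρ' s ≤ 1 + |ρ' s| ^ γ :=
      (le_abs_self _).trans (le_one_add_rpow (abs_nonneg _) hγ)
    linarith [hineq s hs, mul_le_mul_of_nonneg_left hρ' hc.le]
  have hlower : ∀ t ∈ Ico tbar TF, c * ρ t + (θ tbar - c * ρ tbar + c * tbar - c * TF) ≤ θ t :=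
    fun t ht => by
      linarith [hmono ⟨le_rfl, h⟩ ht ht.1, mul_le_mul_of_nonneg_left ht.2.le hc.le]
  refine tendsto_atTop_mono' _ ?_
    (tendsto_atTop_add_const_right _ (θ tbar - c * ρ tbar + c * tbar - c * TF)
      (hblow.const_mul_atTop hc))
  filter_upwards [Ico_mem_nhdsLT h] with t ht using hlower t ht

/-- If `θ' ≥ c|ρ'|^γ` with `γ ≥ 1` and `ρ` blows up at `T_F⁻`, then `θ` blows up too. -/
theorem stmt_3
    (tbar TF : ℝ) (h : tbar < TF)
    (θ θ' ρ ρ' : ℝ → ℝ)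
    (hθderiv : ∀ t ∈ Ico tbar TF, HasDerivAt θ (θ' t) t)
    (hθcont : ContinuousOn θ' (Ico tbar TF))
    (hρderiv : ∀ t ∈ Ico tbar TF, HasDerivAt ρ (ρ' t) t)
    (hρcont : ContinuousOn ρ' (Ico tbar TF))
    (c γ : ℝ) (hc : 0 < c) (hγ : 1 ≤ γ)
    (hineq : ∀ s ∈ Ico tbar TF, c * |ρ' s| ^ γ ≤ θ' s)
    (hblow : Tendsto ρ (nhdsWithin TF (Iio TF)) atTop) :
    Tendsto θ (nhdsWithin TF (Iio TF)) atTop :=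
  stmt_3_general tbar TF h θ θ' ρ ρ' hθderiv hρderiv c γ hc hγ hineq hblow
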